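/- Let A ∈ ℝ^{n×n}, 𝐀 = I_q ⊗ A, and 𝐁 ∈ ℝ^{qn×p}. For distinct eigenvalues μ_1,...,μ_m of A* with generalized eigenspace bases U_κ (range U_κ = null(A*−μ_κ I)^{n_κ}, A*U_κ = U_κ A_κ*), and controllability matrix 𝐖 = [𝐁 𝐀𝐁 ⋯ 𝐀^{n-1}𝐁], the following are equivalent: (i) range 𝐖 ⊇ range[(e_k−e_ℓ)⊗I_n]; (ii) for every κ, range 𝐖_κ ⊇ range[(e_k−e_ℓ)⊗I_{n_κ}], where 𝐖_κ is the controllability matrix of the pair (I_q⊗A_κ, [I_q⊗U_κ*]𝐁). -/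

import Mathlib

open Matrix Kronecker Polynomial

/-- Controllability matrix `[B  MB  ⋯  M^{N-1}B]` over ℂ. -/
noncomputable def ctrbC {ι J : Type*} [Fintype ι] [DecidableEq ι]
    (M : Matrix ι ι ℂ) (B : Matrix ι J ℂ) (N : ℕ) : Matrix ι (Fin N × J) ℂ :=
  Matrix.of fun x rσ => ((M ^ (rσ.1 : ℕ)) * B) x rσ.2

/-!
Both inclusions are tested against `ker 𝐖ᴴ`: `range 𝐖 ⊇ range[(e_k - e_ℓ) ⊗ I]` says exactly
that every `z ∈ ker 𝐖ᴴ` has equal blocks `z_k = z_ℓ`. By Cayley–Hamilton, `ker 𝐖ᴴ` is the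
unobservable subspace of `(I ⊗ A*, 𝐁*)`, and likewise for `𝐖_κ`. Since `A* U_κ = U_κ A_κ*`,
a vector `w` is unobservable for the κ-th pair iff `(I ⊗ U_κ) w` is unobservable for the full
pair, and injectivity of `U_κ` gives (i) ⇒ (ii). Conversely, write an unobservable `z` as
`∑ κ, (I ⊗ U_κ) g_κ`. The polynomial `p_κ = ∏_{κ' ≠ κ} (X - μ_κ')^{n_κ'}` annihilates every
`A_κ'*` with `κ' ≠ κ`, so `p_κ(I ⊗ A*) z = (I ⊗ U_κ) p_κ(I ⊗ A_κ*) g_κ` and (ii) makes the blocks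
of `p_κ(A_κ*) g_κ` equal; `p_κ(A_κ*)` is invertible because `p_κ` is coprime to the
characteristic polynomial `(X - μ_κ)^{n_κ}` of `A_κ*`.
-/

theorem Polynomial.isCoprime_X_sub_C_pow_prod_erase {K ι : Type*} [Field K] [Fintype ι]
    [DecidableEq ι] {μ : ι → K} (hμ : Function.Injective μ) (d : ι → ℕ) (κ : ι) :
    IsCoprime ((X - C (μ κ)) ^ d κ) (∏ κ' ∈ Finset.univ.erase κ, (X - C (μ κ')) ^ d κ') :=
  IsCoprime.prod_right fun _ hκ' =>
    (pairwise_coprime_X_sub_C hμ (Finset.ne_of_mem_erase hκ').symm).pow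

namespace Matrix

section Intertwining

variable {R ι ι' : Type*} [CommRing R] [Fintype ι] [DecidableEq ι] [Fintype ι'] [DecidableEq ι']
  {P : Matrix ι ι R} {Q : Matrix ι' ι' R} {V : Matrix ι ι' R}

theorem pow_mul_eq_mul_pow_of_mul_eq (h : P * V = V * Q) (r : ℕ) : P ^ r * V = V * Q ^ r := by
  induction r with
  | zero => simp
  | succ r ih => rw [pow_succ, pow_succ, Matrix.mul_assoc, h, ← Matrix.mul_assoc, ih,
      Matrix.mul_assoc]

theorem aeval_mul_eq_mul_aeval_of_mul_eq (h : P * V = V * Q) (s : R[X]) :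
    aeval P s * V = V * aeval Q s := by
  simp only [aeval_eq_sum_range, Matrix.sum_mul, Matrix.mul_sum, Matrix.smul_mul,
    Matrix.mul_smul, pow_mul_eq_mul_pow_of_mul_eq h]

end Intertwining

theorem mulVec_injective_aeval_of_isCoprime {R ι : Type*} [CommRing R] [Fintype ι]
    [DecidableEq ι] {M : Matrix ι ι R} {p s : R[X]} (hp : aeval M p = 0) (h : IsCoprime p s) :
    Function.Injective (aeval M s).mulVec := by
  obtain ⟨a, b, hab⟩ := h
  have hinv : aeval M b * aeval M s = 1 := by
    simpa [hp] using congrArg (aeval M) hab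
  refine Function.LeftInverse.injective (g := (aeval M b).mulVec) fun x => ?_
  rw [mulVec_mulVec, hinv, one_mulVec]

theorem exists_mulVec_eq_iff_forall_conjTranspose_mulVec_eq_zero {𝕜 ι J : Type*} [RCLike 𝕜]
    [Fintype ι] [Fintype J] (M : Matrix ι J 𝕜) (x : ι → 𝕜) :
    (∃ α, M *ᵥ α = x) ↔ ∀ z, Mᴴ *ᵥ z = 0 → star z ⬝ᵥ x = 0 := by
  classical
  have h := LinearMap.orthogonal_ker (toEuclideanLin Mᴴ)
  rw [← toEuclideanLin_conjTranspose_eq_adjoint, conjTranspose_conjTranspose] at h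
  have hx := congrArg (WithLp.toLp 2 x ∈ ·) h
  simp only [Submodule.mem_orthogonal, LinearMap.mem_range, LinearMap.mem_ker, eq_iff_iff,
    (WithLp.toLp_surjective 2).forall, (WithLp.toLp_surjective 2).exists,
    toLpLin_toLp, toLin'_apply, WithLp.ofLp_zero, (WithLp.toLp_injective 2).eq_iff,
    EuclideanSpace.inner_toLp_toLp] at hx
  simpa only [dotProduct_comm x] using hx.symm

section Unobservable

variable {R ι ι' J : Type*} [CommRing R] [Fintype ι] [DecidableEq ι]

def unobservable (M : Matrix ι ι R) (C : Matrix J ι R) : Submodule R (ι → R) :=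
  ⨅ r : ℕ, LinearMap.ker (C * M ^ r).mulVecLin

variable {M : Matrix ι ι R} {C : Matrix J ι R} {z : ι → R}

theorem mem_unobservable : z ∈ unobservable M C ↔ ∀ r : ℕ, (C * M ^ r) *ᵥ z = 0 := by
  simp [unobservable]

theorem pow_mulVec_mem_unobservable (hz : z ∈ unobservable M C) (d : ℕ) :
    M ^ d *ᵥ z ∈ unobservable M C := by
  rw [mem_unobservable] at hz ⊢
  intro r
  rw [mulVec_mulVec, Matrix.mul_assoc, ← pow_add, hz]

theorem aeval_mulVec_mem_unobservable (hz : z ∈ unobservable M C) (s : R[X]) :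
    aeval M s *ᵥ z ∈ unobservable M C := by
  rw [aeval_eq_sum_range, sum_mulVec]
  refine Submodule.sum_mem _ fun i _ => ?_
  rw [smul_mulVec]
  exact Submodule.smul_mem _ _ (pow_mulVec_mem_unobservable hz i)

/-- `M ^ r = (X ^ r %ₘ p)(M)` is a combination of the powers `M ^ i` with `i < deg p`. -/
theorem mem_unobservable_iff_of_aeval_eq_zero [Nontrivial R] {p : R[X]} (hp : p.Monic)
    (hM : aeval M p = 0) {N : ℕ} (hN : p.natDegree ≤ N) :
    z ∈ unobservable M C ↔ ∀ r < N, (C * M ^ r) *ᵥ z = 0 := by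
  refine ⟨fun hz r _ => mem_unobservable.1 hz r, fun h => mem_unobservable.2 fun r => ?_⟩
  have hr : M ^ r = aeval M (X ^ r %ₘ p) := by
    rw [aeval_modByMonic_eq_self_of_root hM, map_pow, aeval_X]
  rw [hr, aeval_eq_sum_range, Matrix.mul_sum, sum_mulVec]
  refine Finset.sum_eq_zero fun i _ => ?_
  rw [Matrix.mul_smul, smul_mulVec]
  rcases lt_or_ge i N with hi | hi
  · rw [h i hi, smul_zero]
  · rw [coeff_eq_zero_of_degree_lt, zero_smul]
    calc (X ^ r %ₘ p).degree < p.degree := degree_modByMonic_lt _ hp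
      _ ≤ N := degree_le_of_natDegree_le hN
      _ ≤ i := by exact_mod_cast hi

theorem mulVec_mem_unobservable_iff [Fintype ι'] [DecidableEq ι'] {Q : Matrix ι' ι' R}
    {V : Matrix ι ι' R} (h : M * V = V * Q) {w : ι' → R} :
    V *ᵥ w ∈ unobservable M C ↔ w ∈ unobservable Q (C * V) := by
  simp only [mem_unobservable, mulVec_mulVec, Matrix.mul_assoc, pow_mul_eq_mul_pow_of_mul_eq h]

/-- `s(M) (∑ κ', V κ' g κ') = V κ s(Q κ) g κ`, since `s(M) V κ' = V κ' s(Q κ') = 0` for `κ' ≠ κ`. -/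
theorem aeval_mulVec_mem_unobservable_of_sum_mem {K : Type*} [Fintype K] [DecidableEq K]
    {ικ : K → Type*} [∀ κ, Fintype (ικ κ)] [∀ κ, DecidableEq (ικ κ)]
    {Q : ∀ κ, Matrix (ικ κ) (ικ κ) R} {V : ∀ κ, Matrix ι (ικ κ) R}
    (hMV : ∀ κ, M * V κ = V κ * Q κ) {g : ∀ κ, ικ κ → R}
    (hz : ∑ κ, V κ *ᵥ g κ ∈ unobservable M C) {κ : K} {s : R[X]}
    (hs : ∀ κ' ≠ κ, aeval (Q κ') s = 0) :
    aeval (Q κ) s *ᵥ g κ ∈ unobservable (Q κ) (C * V κ) := by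
  have hsz := aeval_mulVec_mem_unobservable hz s
  rw [mulVec_sum, Finset.sum_eq_single κ (fun κ' _ hκ' => ?_) (by simp), mulVec_mulVec,
    aeval_mul_eq_mul_aeval_of_mul_eq (hMV κ), ← mulVec_mulVec] at hsz
  · exact (mulVec_mem_unobservable_iff (hMV κ)).1 hsz
  · rw [mulVec_mulVec, aeval_mul_eq_mul_aeval_of_mul_eq (hMV κ'), hs κ' hκ', Matrix.mul_zero,
      zero_mulVec]

end Unobservable

section Kronecker

variable {R β ι ι' : Type*} [CommRing R]

def oneKroneckerAlgHom (β : Type*) [Fintype β] [DecidableEq β] [Fintype ι] [DecidableEq ι] :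
    Matrix ι ι R →ₐ[R] Matrix (β × ι) (β × ι) R where
  toFun M := 1 ⊗ₖ M
  map_one' := one_kronecker_one
  map_mul' M N := by rw [← mul_kronecker_mul, Matrix.one_mul]
  map_zero' := kronecker_zero _
  map_add' := kronecker_add _
  commutes' c := by simp [Algebra.algebraMap_eq_smul_one, kronecker_smul]

theorem aeval_one_kronecker [Fintype β] [DecidableEq β] [Fintype ι] [DecidableEq ι]
    (M : Matrix ι ι R) (s : R[X]) : aeval ((1 : Matrix β β R) ⊗ₖ M) s = 1 ⊗ₖ aeval M s :=
  aeval_algHom_apply (oneKroneckerAlgHom β) M s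

theorem one_kronecker_mul_eq_of_mul_eq [Fintype β] [DecidableEq β] [Fintype ι] [DecidableEq ι]
    [Fintype ι'] [DecidableEq ι'] {P : Matrix ι ι R} {Q : Matrix ι' ι' R} {V : Matrix ι ι' R}
    (h : P * V = V * Q) :
    ((1 : Matrix β β R) ⊗ₖ P) * ((1 : Matrix β β R) ⊗ₖ V) =
      ((1 : Matrix β β R) ⊗ₖ V) * ((1 : Matrix β β R) ⊗ₖ Q) := by
  rw [← mul_kronecker_mul, ← mul_kronecker_mul, h]

theorem conjTranspose_one_kronecker [DecidableEq β] {J : Type*} (M : Matrix ι J ℂ) :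
    ((1 : Matrix β β ℂ) ⊗ₖ M)ᴴ = 1 ⊗ₖ Mᴴ := by
  rw [conjTranspose_kronecker, conjTranspose_one]

theorem one_kronecker_mulVec_apply [Fintype β] [DecidableEq β] [Fintype ι'] (M : Matrix ι ι' R)
    (x : β × ι' → R) (i : β) (j : ι) :
    (((1 : Matrix β β R) ⊗ₖ M) *ᵥ x) (i, j) = (M *ᵥ fun j' => x (i, j')) j := by
  simp [mulVec, dotProduct, Fintype.sum_prod_type, one_apply, ite_mul]

end Kronecker

end Matrix

section Blocks

variable {R β ι : Type*}

/-- The orthogonal complement of `range[(e_k - e_ℓ) ⊗ I]`. -/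
def blocksEq [Semiring R] (k ℓ : β) : Submodule R (β × ι → R) where
  carrier := {z | ∀ j, z (k, j) = z (ℓ, j)}
  add_mem' hz hw j := by simp [hz j, hw j]
  zero_mem' _ := rfl
  smul_mem' c z hz j := by simp [hz j]

theorem mem_blocksEq_iff [Semiring R] {k ℓ : β} {z : β × ι → R} :
    z ∈ blocksEq k ℓ ↔ (fun j => z (k, j)) = fun j => z (ℓ, j) :=
  funext_iff.symm

theorem one_kronecker_mulVec_mem_blocksEq_iff [CommRing R] [Fintype β] [DecidableEq β]
    {ι' : Type*} [Fintype ι'] {T : Matrix ι ι' R} (hT : Function.Injective T.mulVec) {k ℓ : β}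
    {x : β × ι' → R} : ((1 : Matrix β β R) ⊗ₖ T) *ᵥ x ∈ blocksEq k ℓ ↔ x ∈ blocksEq k ℓ := by
  simp only [mem_blocksEq_iff, one_kronecker_mulVec_apply]
  exact hT.eq_iff

theorem exists_eq_sum_one_kronecker_mulVec [CommRing R] [Fintype β] [DecidableEq β]
    {K : Type*} [Fintype K] {ικ : K → Type*} [∀ κ, Fintype (ικ κ)] {U : ∀ κ, Matrix ι (ικ κ) R}
    (hU : ∀ x : ι → R, ∃ f : ∀ κ, ικ κ → R, x = ∑ κ, U κ *ᵥ f κ) (z : β × ι → R) :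
    ∃ g : ∀ κ, β × ικ κ → R, z = ∑ κ, ((1 : Matrix β β R) ⊗ₖ U κ) *ᵥ g κ := by
  choose f hf using fun i => hU fun j => z (i, j)
  refine ⟨fun κ x => f x.1 κ x.2, funext fun ⟨i, j⟩ => ?_⟩
  simp only [Finset.sum_apply, one_kronecker_mulVec_apply]
  exact congrFun (hf i) j |>.trans (Finset.sum_apply _ _ _)

theorem star_dotProduct_kronecker_sub [CommRing R] [StarRing R] [Fintype β] [DecidableEq β]
    [Fintype ι] (k ℓ : β) (z : β × ι → R) (v : ι → R) :
    star z ⬝ᵥ (fun x : β × ι => ((if x.1 = k then 1 else 0) - (if x.1 = ℓ then 1 else 0)) * v x.2)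
      = star ((fun j => z (k, j)) - fun j => z (ℓ, j)) ⬝ᵥ v := by
  rw [dotProduct, Fintype.sum_prod_type, Finset.sum_comm]
  refine Finset.sum_congr rfl fun j _ => ?_
  simp [mul_sub, sub_mul, Finset.sum_sub_distrib, mul_ite, ite_mul]

theorem forall_kronecker_sub_mem_range_iff [Fintype β] [DecidableEq β] [Fintype ι]
    {J : Type*} [Fintype J] (W : Matrix (β × ι) J ℂ) (k ℓ : β) :
    (∀ x : β × ι → ℂ, (∃ v : ι → ℂ, ∀ i j, x (i, j) =
        ((if i = k then (1 : ℂ) else 0) - (if i = ℓ then 1 else 0)) * v j) →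
      ∃ α, W *ᵥ α = x) ↔ ∀ z, Wᴴ *ᵥ z = 0 → z ∈ blocksEq k ℓ := by
  set d : (ι → ℂ) → β × ι → ℂ :=
    fun v x => ((if x.1 = k then 1 else 0) - (if x.1 = ℓ then 1 else 0)) * v x.2
  calc _ ↔ ∀ v, ∃ α, W *ᵥ α = d v :=
        ⟨fun h v => h _ ⟨v, fun _ _ => rfl⟩,
          fun h x ⟨v, hv⟩ => (funext fun ij => hv ij.1 ij.2 : x = d v) ▸ h v⟩
    _ ↔ ∀ v z, Wᴴ *ᵥ z = 0 → star z ⬝ᵥ d v = 0 :=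
        forall_congr' fun v => exists_mulVec_eq_iff_forall_conjTranspose_mulVec_eq_zero W (d v)
    _ ↔ ∀ z, Wᴴ *ᵥ z = 0 → ∀ v, star ((fun j => z (k, j)) - fun j => z (ℓ, j)) ⬝ᵥ v = 0 := by
        simp only [d, star_dotProduct_kronecker_sub]
        exact ⟨fun h z hz v => h v z hz, fun h v z hz => h z hz v⟩
    _ ↔ _ := by simp only [dotProduct_eq_zero_iff, star_eq_zero, sub_eq_zero, mem_blocksEq_iff]

end Blocks

section Controllability

variable {β ι J : Type*} [Fintype ι] [DecidableEq ι]

theorem conjTranspose_ctrbC_mulVec_eq_zero_iff (M : Matrix ι ι ℂ) (B : Matrix ι J ℂ) (N : ℕ)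
    (z : ι → ℂ) : (ctrbC M B N)ᴴ *ᵥ z = 0 ↔ ∀ r < N, (Bᴴ * Mᴴ ^ r) *ᵥ z = 0 := by
  have entry : ∀ (r : Fin N) σ,
      ((ctrbC M B N)ᴴ *ᵥ z) (r, σ) = ((Bᴴ * Mᴴ ^ (r : ℕ)) *ᵥ z) σ := by
    intro r σ
    rw [← conjTranspose_pow, ← conjTranspose_mul]
    rfl
  refine ⟨fun h r hr => funext fun σ => ?_, fun h => funext fun rσ => ?_⟩
  · rw [← entry ⟨r, hr⟩, h, Pi.zero_apply, Pi.zero_apply]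
  · rw [entry, h _ rσ.1.2, Pi.zero_apply, Pi.zero_apply]

theorem conjTranspose_ctrbC_one_kronecker_mulVec_eq_zero_iff [Fintype β] [DecidableEq β]
    (M : Matrix ι ι ℂ) (B : Matrix (β × ι) J ℂ) {N : ℕ} (hN : Fintype.card ι ≤ N)
    (z : β × ι → ℂ) :
    (ctrbC ((1 : Matrix β β ℂ) ⊗ₖ M) B N)ᴴ *ᵥ z = 0 ↔ z ∈ unobservable (1 ⊗ₖ Mᴴ) Bᴴ := by
  rw [conjTranspose_ctrbC_mulVec_eq_zero_iff, conjTranspose_one_kronecker,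
    mem_unobservable_iff_of_aeval_eq_zero (charpoly_monic Mᴴ) ?_
      ((charpoly_natDegree_eq_dim Mᴴ).trans_le hN)]
  rw [aeval_one_kronecker, aeval_self_charpoly, kronecker_zero]

end Controllability

theorem stmt11_general (n q p m : ℕ)
    (A : Matrix (Fin n) (Fin n) ℝ)
    (μ : Fin m → ℂ) (hμ : Function.Injective μ)
    (nmul : Fin m → ℕ)
    (U : ∀ κ : Fin m, Matrix (Fin n) (Fin (nmul κ)) ℂ)
    (hUrank : ∀ κ, Function.Injective (U κ).mulVec)
    (Aκ : ∀ κ : Fin m, Matrix (Fin (nmul κ)) (Fin (nmul κ)) ℂ)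
    (hcomm : ∀ κ, (A.map (Complex.ofReal))ᴴ * U κ = U κ * (Aκ κ)ᴴ)
    (hchar : ∀ κ, ((Aκ κ)ᴴ).charpoly = (X - C (μ κ)) ^ nmul κ)
    (hspan : ∀ x : Fin n → ℂ, ∃ f : (κ : Fin m) → Fin (nmul κ) → ℂ,
      x = ∑ κ, (U κ).mulVec (f κ))
    (B : Matrix (Fin q × Fin n) (Fin p) ℝ)
    (k ℓ : Fin q) :
    (∀ x : Fin q × Fin n → ℂ,
      (∃ v : Fin n → ℂ, ∀ i j, x (i, j) =
        ((if i = k then (1 : ℂ) else 0) - (if i = ℓ then 1 else 0)) * v j) →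
      ∃ α : Fin n × Fin p → ℂ,
        (ctrbC ((1 : Matrix (Fin q) (Fin q) ℂ) ⊗ₖ (A.map (Complex.ofReal)))
          (B.map (Complex.ofReal)) n).mulVec α = x) ↔
    (∀ κ : Fin m, ∀ x : Fin q × Fin (nmul κ) → ℂ,
      (∃ v : Fin (nmul κ) → ℂ, ∀ i j, x (i, j) =
        ((if i = k then (1 : ℂ) else 0) - (if i = ℓ then 1 else 0)) * v j) →
      ∃ α : Fin (nmul κ) × Fin p → ℂ,
        (ctrbC ((1 : Matrix (Fin q) (Fin q) ℂ) ⊗ₖ Aκ κ)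
          (((1 : Matrix (Fin q) (Fin q) ℂ) ⊗ₖ (U κ)ᴴ) * (B.map (Complex.ofReal)))
          (nmul κ)).mulVec α = x) := by
  have hUV κ := one_kronecker_mul_eq_of_mul_eq (β := Fin q) (hcomm κ)
  have hann : ∀ κ, aeval (Aκ κ)ᴴ ((X - C (μ κ)) ^ nmul κ) = 0 := fun κ =>
    hchar κ ▸ aeval_self_charpoly _
  simp only [forall_kronecker_sub_mem_range_iff, conjTranspose_mul, conjTranspose_one_kronecker,
    conjTranspose_conjTranspose, conjTranspose_ctrbC_one_kronecker_mulVec_eq_zero_iff,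
    Fintype.card_fin, le_refl]
  refine ⟨fun h κ w hw => ?_, fun h z hz => ?_⟩
  · exact (one_kronecker_mulVec_mem_blocksEq_iff (hUrank κ)).1
      (h _ ((mulVec_mem_unobservable_iff (hUV κ)).2 hw))
  obtain ⟨g, rfl⟩ := exists_eq_sum_one_kronecker_mulVec hspan z
  refine Submodule.sum_mem _ fun κ _ => (one_kronecker_mulVec_mem_blocksEq_iff (hUrank κ)).2 ?_
  set s := ∏ κ' ∈ Finset.univ.erase κ, (X - C (μ κ')) ^ nmul κ'
  have hs : ∀ κ' ≠ κ, aeval ((1 : Matrix (Fin q) (Fin q) ℂ) ⊗ₖ (Aκ κ')ᴴ) s = 0 := by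
    intro κ' hκ'
    obtain ⟨t, ht⟩ : (X - C (μ κ')) ^ nmul κ' ∣ s :=
      Finset.dvd_prod_of_mem _ (Finset.mem_erase.2 ⟨hκ', Finset.mem_univ κ'⟩)
    rw [aeval_one_kronecker, ht, map_mul, hann, zero_mul, kronecker_zero]
  have hgκ := h κ _ (aeval_mulVec_mem_unobservable_of_sum_mem hUV hz hs)
  rw [aeval_one_kronecker] at hgκ
  exact (one_kronecker_mulVec_mem_blocksEq_iff (mulVec_injective_aeval_of_isCoprime (hann κ)
    (isCoprime_X_sub_C_pow_prod_erase hμ nmul κ))).1 hgκ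

/-- (k,ℓ)-controllability via generalized-eigenspace projections:
`range 𝐖 ⊇ range[(e_k−e_ℓ)⊗I_n]` iff for every κ,
`range 𝐖_κ ⊇ range[(e_k−e_ℓ)⊗I_{n_κ}]`. -/
theorem stmt11 (n q p m : ℕ) (hq : 2 ≤ q)
    (A : Matrix (Fin n) (Fin n) ℝ)
    (μ : Fin m → ℂ) (hμ : Function.Injective μ)
    (nmul : Fin m → ℕ) (hsum : ∑ κ, nmul κ = n)
    (U : ∀ κ : Fin m, Matrix (Fin n) (Fin (nmul κ)) ℂ)
    (hUrank : ∀ κ, Function.Injective (U κ).mulVec)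
    (hUrange : ∀ κ (x : Fin n → ℂ),
      (∃ y, (U κ).mulVec y = x) ↔
        ((((A.map (Complex.ofReal))ᴴ - μ κ • 1) ^ nmul κ).mulVec x = 0))
    (Aκ : ∀ κ : Fin m, Matrix (Fin (nmul κ)) (Fin (nmul κ)) ℂ)
    (hcomm : ∀ κ, (A.map (Complex.ofReal))ᴴ * U κ = U κ * (Aκ κ)ᴴ)
    (hchar : ∀ κ, ((Aκ κ)ᴴ).charpoly = (X - C (μ κ)) ^ nmul κ)
    (hspan : ∀ x : Fin n → ℂ, ∃ f : (κ : Fin m) → Fin (nmul κ) → ℂ,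
      x = ∑ κ, (U κ).mulVec (f κ))
    (B : Matrix (Fin q × Fin n) (Fin p) ℝ)
    (hB : ∀ σ (j : Fin n), ∑ i : Fin q, B (i, j) σ = 0)
    (k ℓ : Fin q) (hkl : k ≠ ℓ) :
    (∀ x : Fin q × Fin n → ℂ,
      (∃ v : Fin n → ℂ, ∀ i j, x (i, j) =
        ((if i = k then (1 : ℂ) else 0) - (if i = ℓ then 1 else 0)) * v j) →
      ∃ α : Fin n × Fin p → ℂ,
        (ctrbC ((1 : Matrix (Fin q) (Fin q) ℂ) ⊗ₖ (A.map (Complex.ofReal)))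
          (B.map (Complex.ofReal)) n).mulVec α = x) ↔
    (∀ κ : Fin m, ∀ x : Fin q × Fin (nmul κ) → ℂ,
      (∃ v : Fin (nmul κ) → ℂ, ∀ i j, x (i, j) =
        ((if i = k then (1 : ℂ) else 0) - (if i = ℓ then 1 else 0)) * v j) →
      ∃ α : Fin (nmul κ) × Fin p → ℂ,
        (ctrbC ((1 : Matrix (Fin q) (Fin q) ℂ) ⊗ₖ Aκ κ)
          (((1 : Matrix (Fin q) (Fin q) ℂ) ⊗ₖ (U κ)ᴴ) * (B.map (Complex.ofReal)))
          (nmul κ)).mulVec α = x) :=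
  stmt11_general n q p m A μ hμ nmul U hUrank Aκ hcomm hchar hspan B k ℓ
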